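/- arXiv:0910.0536 — 3 statements merged into one kernel-verified Lean document; each statement's English description precedes it below -/
import Mathlib

section
/- Let p, q ≥ 1 and let A = A₀ + A₁ζ ∈ M_{p+q}(𝒟) with A₀, A₁ ∈ M_{p+q}(K), where A₀ is the block diagonal matrix fromBlocks A₀′ 0 0 A₀″ with A₀′ ∈ M_p(K), A₀″ ∈ M_q(K), and no α ∈ K is a common eigenvalue of A₀′ and A₀″ (i.e. there is no α with det(A₀′ − α·1) = 0 and det(A₀″ − α·1) = 0). Then there exist matrices B₀′, B₁′ ∈ M_p(K) and B₀″, B₁″ ∈ M_q(K) such that: (i) A is similar over 𝒟 to the block diagonal matrix fromBlocks (B₀′ + B₁′ζ) 0 0 (B₀″ + B₁″ζ); (ii) A₀′ is K-similar to B₀′ and A₀″ is K-similar to B₀″. -/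
/-!
Conjugating `A₀ + A₁ζ` by `1 + Nζ` (whose inverse is `1 - Nζ`) keeps `A₀` and replaces `A₁` by
`A₁ + [N, A₀]`. For `A₀ = diag(A₀', A₀'')` and `N` off-diagonal with blocks `Y`, `Z`, the
off-diagonal blocks of `[N, A₀]` are `Y A₀'' - A₀' Y` and `Z A₀' - A₀'' Z`. As `A₀'` and `A₀''`
share no eigenvalue, their characteristic polynomials are coprime, so by Sylvester's argument
`X ↦ A₀' X - X A₀''` is injective, hence onto; thus `Y`, `Z` can cancel the off-diagonal blocks
of `A₁`, and one may keep `B₀ = A₀`.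
-/

open Matrix

/-- The 𝒟-matrix `A₀ + A₁ζ` built from two matrices over `K`. -/
def dualMat {K : Type*} [Field K] {ι : Type*} (A₀ A₁ : Matrix ι ι K) :
    Matrix ι ι (DualNumber K) :=
  A₀.map (TrivSqZeroExt.inl : K → DualNumber K) +
    A₁.map (TrivSqZeroExt.inr : K → DualNumber K)

/-- Similarity of matrices over the dual numbers. -/
def DSimilar {K : Type*} [Field K] {ι : Type*} [Fintype ι] [DecidableEq ι]
    (A B : Matrix ι ι (DualNumber K)) : Prop :=
  ∃ G : Matrix ι ι (DualNumber K), IsUnit G ∧ B = G * A * G⁻¹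

/-- K-similarity of matrices over `K`. -/
def KSimilar {K : Type*} [Field K] {ι : Type*} [Fintype ι] [DecidableEq ι]
    (A B : Matrix ι ι K) : Prop :=
  ∃ P : Matrix ι ι K, IsUnit P ∧ B = P * A * P⁻¹

open Polynomial

section Sylvester

variable {R K : Type*} [CommRing R] [Field K] {m n : Type*} [Fintype m] [DecidableEq m]
  [Fintype n] [DecidableEq n]

theorem Matrix.aeval_mul_eq_mul_aeval {A : Matrix m m R} {B : Matrix n n R} {X : Matrix m n R}
    (h : A * X = X * B) (f : R[X]) : aeval A f * X = X * aeval B f := by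
  have hpow : ∀ k : ℕ, A ^ k * X = X * B ^ k := by
    intro k
    induction k with
    | zero => simp
    | succ k ih => rw [pow_succ, pow_succ, Matrix.mul_assoc, h, ← Matrix.mul_assoc, ih,
        Matrix.mul_assoc]
  induction f using Polynomial.induction_on' with
  | add f g hf hg => rw [map_add, map_add, Matrix.add_mul, Matrix.mul_add, hf, hg]
  | monomial k a => simp [aeval_monomial, Algebra.algebraMap_eq_smul_one, hpow]

theorem Matrix.exists_mul_sub_mul_eq_of_isCoprime_charpoly (A : Matrix m m K) (B : Matrix n n K)
    (h : IsCoprime A.charpoly B.charpoly) (C : Matrix m n K) :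
    ∃ X : Matrix m n K, A * X - X * B = C := by
  have hinj : Function.Injective (mulLeftLinearMap n K A - mulRightLinearMap m K B) := by
    refine (injective_iff_map_eq_zero _).2 fun X hX => ?_
    have hAX : A * X = X * B := sub_eq_zero.1 hX
    obtain ⟨a, b, hab⟩ := h
    -- `a χ_A + b χ_B = 1` and `χ_A(A) = 0` make `χ_B(A)` invertible, while `χ_B(A) X = X χ_B(B) = 0`
    calc X = aeval A (a * A.charpoly + b * B.charpoly) * X := by simp [hab]
      _ = aeval A b * (X * aeval B B.charpoly) := by
        rw [map_add, map_mul, map_mul, aeval_self_charpoly, mul_zero, zero_add, Matrix.mul_assoc,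
          Matrix.aeval_mul_eq_mul_aeval hAX]
      _ = 0 := by rw [aeval_self_charpoly, Matrix.mul_zero, Matrix.mul_zero]
  exact LinearMap.injective_iff_surjective.1 hinj C

theorem Matrix.det_sub_smul_one_eq_zero_iff_isRoot_charpoly (A : Matrix m m R) (α : R) :
    (A - α • (1 : Matrix m m R)).det = 0 ↔ A.charpoly.IsRoot α := by
  rw [IsRoot, eval_charpoly, ← neg_sub, det_neg]
  simp [Matrix.smul_one_eq_diagonal, Matrix.scalar_apply]

theorem Matrix.isCoprime_charpoly_of_not_exists_det_sub_smul_one_eq_zero [IsAlgClosed K]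
    (A : Matrix m m K) (B : Matrix n n K)
    (h : ¬ ∃ α : K, (A - α • (1 : Matrix m m K)).det = 0 ∧ (B - α • (1 : Matrix n n K)).det = 0) :
    IsCoprime A.charpoly B.charpoly := by
  rw [isCoprime_iff_aeval_ne_zero_of_isAlgClosed K K]
  intro α
  simp only [det_sub_smul_one_eq_zero_iff_isRoot_charpoly, not_exists, not_and_or] at h
  simpa [IsRoot] using h α

end Sylvester

section DualNumber

variable {K : Type*} [Field K] {m n : Type*}

theorem dualMat_mul [Fintype m] (X x Y y : Matrix m m K) :
    dualMat X x * dualMat Y y = dualMat (X * Y) (X * y + x * Y) := by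
  ext i j <;>
    simp [dualMat, Matrix.mul_apply, TrivSqZeroExt.fst_sum, TrivSqZeroExt.snd_sum,
      Finset.sum_add_distrib, mul_comm]

theorem dualMat_one_zero [DecidableEq m] : (dualMat 1 0 : Matrix m m (DualNumber K)) = 1 := by
  ext i j <;> simp [dualMat, Matrix.one_apply, apply_ite]

theorem fromBlocks_dualMat (W₀ W₁ : Matrix m m K) (Z₀ Z₁ : Matrix n n K) :
    fromBlocks (dualMat W₀ W₁) 0 0 (dualMat Z₀ Z₁) =
      dualMat (fromBlocks W₀ 0 0 Z₀) (fromBlocks W₁ 0 0 Z₁) := by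
  ext (i | i) (j | j) <;> simp [dualMat]

variable [Fintype m] [DecidableEq m]

theorem dualMat_one_mul_dualMat_one_neg (N : Matrix m m K) :
    dualMat 1 N * dualMat 1 (-N) = 1 := by
  simpa [dualMat_mul] using dualMat_one_zero

theorem dSimilar_dualMat_add_commutator (A₀ A₁ N : Matrix m m K) :
    DSimilar (dualMat A₀ A₁) (dualMat A₀ (A₁ + (N * A₀ - A₀ * N))) := by
  refine ⟨dualMat 1 N, .of_mul_eq_one _ (dualMat_one_mul_dualMat_one_neg N), ?_⟩
  rw [inv_eq_right_inv (dualMat_one_mul_dualMat_one_neg N), dualMat_mul, dualMat_mul]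
  congr 1 <;> noncomm_ring

end DualNumber

theorem KSimilar.refl {K : Type*} [Field K] {m : Type*} [Fintype m] [DecidableEq m]
    (A : Matrix m m K) : KSimilar A A :=
  ⟨1, isUnit_one, by simp⟩

theorem Matrix.add_commutator_fromBlocks_offDiag {R : Type*} [CommRing R] {m n : Type*}
    [Fintype m] [Fintype n] (A : Matrix m m R) (D : Matrix n n R)
    (M : Matrix (m ⊕ n) (m ⊕ n) R) {Y : Matrix m n R} {Z : Matrix n m R}
    (hY : A * Y - Y * D = M.toBlocks₁₂) (hZ : D * Z - Z * A = M.toBlocks₂₁) :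
    M + (fromBlocks 0 Y Z 0 * fromBlocks A 0 0 D - fromBlocks A 0 0 D * fromBlocks 0 Y Z 0) =
      fromBlocks M.toBlocks₁₁ 0 0 M.toBlocks₂₂ := by
  conv_lhs => rw [← fromBlocks_toBlocks M, ← hY, ← hZ]
  simp only [fromBlocks_multiply, sub_eq_add_neg, fromBlocks_neg, fromBlocks_add]
  congr 1 <;> simp

theorem stmt_1_general {K : Type*} [Field K] [IsAlgClosed K] {p q : ℕ}
    (A₀' : Matrix (Fin p) (Fin p) K) (A₀'' : Matrix (Fin q) (Fin q) K)
    (A₁ : Matrix (Fin p ⊕ Fin q) (Fin p ⊕ Fin q) K)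
    (hev : ¬ ∃ α : K, (A₀' - α • (1 : Matrix (Fin p) (Fin p) K)).det = 0 ∧
        (A₀'' - α • (1 : Matrix (Fin q) (Fin q) K)).det = 0) :
    ∃ (B₀' B₁' : Matrix (Fin p) (Fin p) K) (B₀'' B₁'' : Matrix (Fin q) (Fin q) K),
      DSimilar (dualMat (Matrix.fromBlocks A₀' 0 0 A₀'') A₁)
        (Matrix.fromBlocks (dualMat B₀' B₁') 0 0 (dualMat B₀'' B₁'')) ∧
      KSimilar A₀' B₀' ∧ KSimilar A₀'' B₀'' := by
  have hcop := isCoprime_charpoly_of_not_exists_det_sub_smul_one_eq_zero A₀' A₀'' hev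
  obtain ⟨Y, hY⟩ := exists_mul_sub_mul_eq_of_isCoprime_charpoly A₀' A₀'' hcop A₁.toBlocks₁₂
  obtain ⟨Z, hZ⟩ := exists_mul_sub_mul_eq_of_isCoprime_charpoly A₀'' A₀' hcop.symm A₁.toBlocks₂₁
  refine ⟨A₀', A₁.toBlocks₁₁, A₀'', A₁.toBlocks₂₂, ?_, .refl A₀', .refl A₀''⟩
  rw [fromBlocks_dualMat, ← add_commutator_fromBlocks_offDiag A₀' A₀'' A₁ hY hZ]
  exact dSimilar_dualMat_add_commutator _ _ _

/-- Theorem 2.2: splitting off blocks with disjoint spectra. -/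
theorem stmt_1 {K : Type*} [Field K] [IsAlgClosed K] [CharZero K] {p q : ℕ}
    (hp : 1 ≤ p) (hq : 1 ≤ q)
    (A₀' : Matrix (Fin p) (Fin p) K) (A₀'' : Matrix (Fin q) (Fin q) K)
    (A₁ : Matrix (Fin p ⊕ Fin q) (Fin p ⊕ Fin q) K)
    (hev : ¬ ∃ α : K, (A₀' - α • (1 : Matrix (Fin p) (Fin p) K)).det = 0 ∧
        (A₀'' - α • (1 : Matrix (Fin q) (Fin q) K)).det = 0) :
    ∃ (B₀' B₁' : Matrix (Fin p) (Fin p) K) (B₀'' B₁'' : Matrix (Fin q) (Fin q) K),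
      DSimilar (dualMat (Matrix.fromBlocks A₀' 0 0 A₀'') A₁)
        (Matrix.fromBlocks (dualMat B₀' B₁') 0 0 (dualMat B₀'' B₁'')) ∧
      KSimilar A₀' B₀' ∧ KSimilar A₀'' B₀'' :=
  stmt_1_general A₀' A₀'' A₁ hev
end

section
/- Let N ∈ Mₙ(K) be a fixed matrix (in the paper, N = J_ν is a nilpotent Jordan matrix) and let A₁, A₁′ ∈ Mₙ(K). If N + A₁ζ is similar over 𝒟 to N + A₁′ζ, then there exist B₀ ∈ GLₙ(K) with B₀N = NB₀ and C₁ ∈ Mₙ(K) such that the matrix D = (Eₙ + C₁ζ)B₀ ∈ GLₙ(𝒟) satisfies D(N + A₁ζ)D⁻¹ = N + A₁′ζ. -/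
open Matrix

/-!
Write a conjugating matrix as `G = G₀ + G₁ζ`. Since `ζ² = 0`, the real part of
`G (N + A₁ζ) = (N + A₁'ζ) G` says that `G₀` commutes with `N`, and `G₀` is invertible
because reduction modulo `ζ` is a ring homomorphism. Then `G = (Eₙ + G₁G₀⁻¹ζ) G₀`
is already of the required form.
-/

namespace DualNumber

open TrivSqZeroExt

variable {K : Type*} [Field K] {ι : Type*}

@[simp]
lemma dualMat_apply_fst (A₀ A₁ : Matrix ι ι K) (i j : ι) :
    fst (dualMat A₀ A₁ i j) = A₀ i j := by
  simp [dualMat]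

@[simp]
lemma dualMat_apply_snd (A₀ A₁ : Matrix ι ι K) (i j : ι) :
    snd (dualMat A₀ A₁ i j) = A₁ i j := by
  simp [dualMat]

lemma dualMat_map_fst_map_snd (G : Matrix ι ι (DualNumber K)) :
    dualMat (G.map fst) (G.map snd) = G := by
  ext i j <;> simp

lemma dualMat_inj {A₀ A₁ B₀ B₁ : Matrix ι ι K} :
    dualMat A₀ A₁ = dualMat B₀ B₁ ↔ A₀ = B₀ ∧ A₁ = B₁ := by
  refine ⟨fun h => ⟨?_, ?_⟩, fun ⟨h₀, h₁⟩ => h₀ ▸ h₁ ▸ rfl⟩ <;> ext i j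
  · simpa using congrArg (fun M => fst (M i j)) h
  · simpa using congrArg (fun M => snd (M i j)) h

lemma dualMat_mul [Fintype ι] (A₀ A₁ B₀ B₁ : Matrix ι ι K) :
    dualMat A₀ A₁ * dualMat B₀ B₁ = dualMat (A₀ * B₀) (A₀ * B₁ + A₁ * B₀) := by
  ext i j <;>
    simp [Matrix.mul_apply, fst_sum, snd_sum, Finset.sum_add_distrib]

lemma isUnit_map_fst [Fintype ι] [DecidableEq ι] {G : Matrix ι ι (DualNumber K)}
    (hG : IsUnit G) : IsUnit (G.map fst) :=
  hG.map (fstHom K K K).mapMatrix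

lemma map_fst_mul_comm_of_mul_eq [Fintype ι] {G : Matrix ι ι (DualNumber K)}
    {N A₁ A₁' : Matrix ι ι K} (hG : G * dualMat N A₁ = dualMat N A₁' * G) :
    G.map fst * N = N * G.map fst := by
  rw [← dualMat_map_fst_map_snd G, dualMat_mul, dualMat_mul] at hG
  exact (dualMat_inj.mp hG).1

lemma dualMat_one_mul_dualMat_map_fst [Fintype ι] [DecidableEq ι]
    {G : Matrix ι ι (DualNumber K)} (hG₀ : IsUnit (G.map fst)) :
    dualMat 1 (G.map snd * (G.map fst)⁻¹) * dualMat (G.map fst) 0 = G := by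
  rw [dualMat_mul, one_mul, mul_zero, zero_add,
    nonsing_inv_mul_cancel_right _ _ ((isUnit_iff_isUnit_det _).mp hG₀),
    dualMat_map_fst_map_snd]

end DualNumber

open DualNumber TrivSqZeroExt in
/-- Lemma 2.2: if `N + A₁ζ ∼ N + A₁′ζ`, the conjugating matrix can be chosen
of the form `D = (Eₙ + C₁ζ)B₀` with `B₀ ∈ GLₙ(K)` commuting with `N`. -/
theorem stmt_3 {K : Type*} [Field K] {n : ℕ}
    (N A₁ A₁' : Matrix (Fin n) (Fin n) K)
    (h : DSimilar (dualMat N A₁) (dualMat N A₁')) :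
    ∃ (B₀ C₁ : Matrix (Fin n) (Fin n) K),
      IsUnit B₀ ∧ B₀ * N = N * B₀ ∧
      IsUnit (dualMat 1 C₁ * dualMat B₀ 0) ∧
      (dualMat 1 C₁ * dualMat B₀ 0) * dualMat N A₁ * (dualMat 1 C₁ * dualMat B₀ 0)⁻¹ =
        dualMat N A₁' := by
  obtain ⟨G, hG, hconj⟩ := h
  have hcomm : G * dualMat N A₁ = dualMat N A₁' * G := by
    rw [hconj, nonsing_inv_mul_cancel_right _ _ ((isUnit_iff_isUnit_det _).mp hG)]
  have hG₀ := isUnit_map_fst hG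
  refine ⟨G.map fst, G.map snd * (G.map fst)⁻¹, hG₀, map_fst_mul_comm_of_mul_eq hcomm, ?_⟩
  rw [dualMat_one_mul_dualMat_map_fst hG₀]
  exact ⟨hG, hconj.symm⟩
end

section
/- Let α ∈ K and A₁, B₁ ∈ Mₙ(K). Then αEₙ + A₁ζ and αEₙ + B₁ζ are similar over 𝒟 if and only if A₁ and B₁ are K-similar. (In particular, for any invertible C = C₀ + C₁ζ ∈ GLₙ(𝒟), one has C(αEₙ + A₁ζ)C⁻¹ = αEₙ + C₀A₁C₀⁻¹ζ.) -/
open Matrix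

section aux
variable {K : Type*} [Field K] {ι : Type*}

lemma dualMat_mul_s19 [Fintype ι] (A₀ A₁ B₀ B₁ : Matrix ι ι K) :
    dualMat A₀ A₁ * dualMat B₀ B₁ = dualMat (A₀ * B₀) (A₀ * B₁ + A₁ * B₀) := by
  refine Matrix.ext fun i j => ?_
  simp only [dualMat, Matrix.add_apply, Matrix.mul_apply, Matrix.map_apply]
  refine TrivSqZeroExt.ext ?_ ?_ <;>
    simp [TrivSqZeroExt.fst_sum, TrivSqZeroExt.snd_sum, TrivSqZeroExt.fst_mul,
      TrivSqZeroExt.snd_mul, smul_eq_mul, mul_comm, Finset.sum_add_distrib]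

lemma dualMat_snd (A₀ A₁ : Matrix ι ι K) :
    (dualMat A₀ A₁).map (TrivSqZeroExt.snd : DualNumber K → K) = A₁ := by
  refine Matrix.ext fun i j => ?_
  simp [dualMat, Matrix.map_apply]

lemma eq_dualMat (G : Matrix ι ι (DualNumber K)) :
    G = dualMat (G.map TrivSqZeroExt.fst) (G.map TrivSqZeroExt.snd) := by
  refine Matrix.ext fun i j => ?_
  simp only [dualMat, Matrix.add_apply, Matrix.map_apply]
  exact (TrivSqZeroExt.inl_fst_add_inr_snd_eq _).symm

lemma dualMat_inl [Fintype ι] [DecidableEq ι] (P : Matrix ι ι K) :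
    (TrivSqZeroExt.inlHom K K).mapMatrix P = dualMat P 0 := by
  refine Matrix.ext fun i j => ?_
  simp [dualMat, Matrix.map_apply]

lemma conj_eq_iff {R : Type*} [CommRing R] [Fintype ι] [DecidableEq ι]
    {G A B : Matrix ι ι R} (hG : IsUnit G) :
    B = G * A * G⁻¹ ↔ B * G = G * A := by
  have hd : IsUnit G.det := (Matrix.isUnit_iff_isUnit_det G).mp hG
  constructor
  · rintro rfl
    rw [Matrix.mul_assoc, Matrix.nonsing_inv_mul G hd, Matrix.mul_one]
  · intro h
    rw [← h, Matrix.mul_assoc, Matrix.mul_nonsing_inv G hd, Matrix.mul_one]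

end aux

/-- Lemma 4.4 (key step): `αEₙ + A₁ζ` and `αEₙ + B₁ζ` are similar over 𝒟 if and
only if `A₁` and `B₁` are K-similar. -/
theorem stmt_19 {K : Type*} [Field K] {n : ℕ}
    (α : K) (A₁ B₁ : Matrix (Fin n) (Fin n) K) :
    DSimilar (dualMat (α • (1 : Matrix (Fin n) (Fin n) K)) A₁)
        (dualMat (α • (1 : Matrix (Fin n) (Fin n) K)) B₁) ↔
      KSimilar A₁ B₁ := by
  constructor
  · rintro ⟨G, hG, hEq⟩
    set P := G.map (TrivSqZeroExt.fst : DualNumber K → K) with hP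
    set Q := G.map (TrivSqZeroExt.snd : DualNumber K → K) with hQ
    have hPu : IsUnit P := by
      have := hG.map ((TrivSqZeroExt.fstHom K K K).toRingHom.mapMatrix)
      simpa [hP, RingHom.mapMatrix_apply, Matrix.map] using this
    refine ⟨P, hPu, ?_⟩
    rw [conj_eq_iff hPu]
    have h2 : dualMat (α • (1 : Matrix (Fin n) (Fin n) K)) B₁ * G
        = G * dualMat (α • (1 : Matrix (Fin n) (Fin n) K)) A₁ :=
      (conj_eq_iff hG).mp hEq
    rw [eq_dualMat G, ← hP, ← hQ, dualMat_mul_s19, dualMat_mul_s19] at h2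
    have h3 := congrArg (fun M => M.map (TrivSqZeroExt.snd : DualNumber K → K)) h2
    simp only [dualMat_snd] at h3
    have h4 : α • Q + B₁ * P = P * A₁ + α • Q := by
      simpa [Matrix.smul_mul, Matrix.mul_smul] using h3
    rw [add_comm (P * A₁)] at h4
    exact add_left_cancel h4
  · rintro ⟨P, hPu, hEq⟩
    have hGu : IsUnit (dualMat P (0 : Matrix (Fin n) (Fin n) K)) := by
      have := hPu.map ((TrivSqZeroExt.inlHom K K).mapMatrix)
      rwa [dualMat_inl] at this
    refine ⟨dualMat P 0, hGu, ?_⟩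
    rw [conj_eq_iff hGu, dualMat_mul_s19, dualMat_mul_s19]
    have hBP : B₁ * P = P * A₁ := by
      rw [hEq, Matrix.mul_assoc, Matrix.nonsing_inv_mul P
        ((Matrix.isUnit_iff_isUnit_det P).mp hPu), Matrix.mul_one]
    simp [hBP, Matrix.smul_mul, Matrix.mul_smul]
end
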